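/- arXiv:1408.1693 — 2 statements merged into one kernel-verified Lean document; each statement's English description precedes it below -/
import Mathlib

section
/- Let A and B be real symmetric positive definite n×n matrices with A ⪯ B ⪯ κ·A for some κ ≥ 2, let R = I − B^{−1}A, let ν ∈ (0, 1/(2κ)), let x_0 ∈ ℝⁿ, and let (x_i)_{i≥0} be a ν-approximate power sequence for R in the B-norm starting at x_0. Then for every l ∈ ℕ: | Σ_{i=1}^l (1/i)·x_0ᵀ R^i x_0 − Σ_{i=1}^l (1/i)·x_0ᵀ x_i | ≤ 4·ν·κ²·√(κ(B))·‖x_0‖², where ‖x_0‖ is the Euclidean norm and κ(B) = λ_max(B)/λ_min(B) is the condition number of B. -/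
open Matrix

/-- The `B`-norm `‖x‖_B = √(xᵀ B x)` on `ℝⁿ`. -/
noncomputable def vecBNorm {n : ℕ} (B : Matrix (Fin n) (Fin n) ℝ) (x : Fin n → ℝ) : ℝ :=
  Real.sqrt (x ⬝ᵥ B.mulVec x)

/-- Condition number `λ_max / λ_min` of a Hermitian real matrix. -/
noncomputable def condNumber {n : ℕ} (B : Matrix (Fin n) (Fin n) ℝ) (hB : B.IsHermitian) : ℝ :=
  (⨆ i, hB.eigenvalues i) / (⨅ i, hB.eigenvalues i)

/-!
Write `R = B⁻¹C` with `C = B - A`. The hypotheses give `0 ⪯ C ⪯ ρB` for `ρ = 1 - 1/κ`, and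
Cauchy–Schwarz for the form `C` makes `R` a `ρ`-contraction in the `B`-norm. Along a
`ν`-approximate power sequence the norms then grow at most like `a^k`, `a = (1 + ν)ρ`, and the
deviation from the exact powers satisfies `‖x_k - R^k x₀‖_B ≤ (a^k - ρ^k) ‖x₀‖_B`. Pairing with
`x₀` costs the factor `√κ(B) ‖x₀‖² / ‖x₀‖_B`, and `(a^{i+1} - ρ^{i+1}) / (i+1) ≤ (a - ρ) a^i` sums
to `(a - ρ) / (1 - a) ≤ 2κν` because `1 - a > 1/(2κ)`.
-/

open Finset

namespace AddGroupSeminorm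

variable {E : Type*} [AddCommGroup E]

def IsApproxPowerSeq (p : AddGroupSeminorm E) (T : E →+ E) (ν : ℝ) (x : ℕ → E) : Prop :=
  ∀ k, p (x (k + 1) - T (x k)) ≤ ν * p (T (x k))

variable {p : AddGroupSeminorm E} {T : E →+ E} {ρ ν : ℝ} {x : ℕ → E}

theorem IsApproxPowerSeq.apply_le (h : p.IsApproxPowerSeq T ν x) (hρ : 0 ≤ ρ) (hν : 0 ≤ ν)
    (hT : ∀ v, p (T v) ≤ ρ * p v) (k : ℕ) :
    p (x k) ≤ ((1 + ν) * ρ) ^ k * p (x 0) := by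
  induction k with
  | zero => simp
  | succ k ih =>
    calc p (x (k + 1)) ≤ p (x (k + 1) - T (x k)) + p (T (x k)) := by
          simpa using map_add_le_add p (x (k + 1) - T (x k)) (T (x k))
      _ ≤ (1 + ν) * p (T (x k)) := by linarith [h k]
      _ ≤ (1 + ν) * (ρ * (((1 + ν) * ρ) ^ k * p (x 0))) := by
          gcongr
          exact (hT _).trans (by gcongr)
      _ = ((1 + ν) * ρ) ^ (k + 1) * p (x 0) := by ring

theorem IsApproxPowerSeq.apply_sub_iterate_le (h : p.IsApproxPowerSeq T ν x) (hρ : 0 ≤ ρ)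
    (hν : 0 ≤ ν) (hT : ∀ v, p (T v) ≤ ρ * p v) (k : ℕ) :
    p (x k - T^[k] (x 0)) ≤ (((1 + ν) * ρ) ^ k - ρ ^ k) * p (x 0) := by
  induction k with
  | zero => simp
  | succ k ih =>
    have hsplit :
        x (k + 1) - T^[k + 1] (x 0) = (x (k + 1) - T (x k)) + T (x k - T^[k] (x 0)) := by
      rw [map_sub, Function.iterate_succ_apply']
      abel
    calc p (x (k + 1) - T^[k + 1] (x 0))
        ≤ p (x (k + 1) - T (x k)) + p (T (x k - T^[k] (x 0))) := by
          rw [hsplit]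
          exact map_add_le_add p _ _
      _ ≤ ν * (ρ * p (x k)) + ρ * p (x k - T^[k] (x 0)) := by
          gcongr
          · exact (h k).trans (by gcongr; exact hT _)
          · exact hT _
      _ ≤ ν * (ρ * (((1 + ν) * ρ) ^ k * p (x 0)))
            + ρ * ((((1 + ν) * ρ) ^ k - ρ ^ k) * p (x 0)) := by
          gcongr
          exact h.apply_le hρ hν hT k
      _ = (((1 + ν) * ρ) ^ (k + 1) - ρ ^ (k + 1)) * p (x 0) := by ring

end AddGroupSeminorm

namespace Matrix.PosSemidef

variable {ι : Type*} [Fintype ι] {C : Matrix ι ι ℝ}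

theorem dotProduct_mulVec_sq_le (hC : C.PosSemidef) (u v : ι → ℝ) :
    (u ⬝ᵥ C *ᵥ v) ^ 2 ≤ (u ⬝ᵥ C *ᵥ u) * (v ⬝ᵥ C *ᵥ v) := by
  have := @real_inner_mul_inner_self_le _ (C.toSeminormedAddCommGroup hC)
    (C.toInnerProductSpace hC) u v
  rw [sq, dotProduct_comm u, dotProduct_comm u, dotProduct_comm v]
  exact this

theorem dotProduct_mulVec_nonneg' (hC : C.PosSemidef) (u : ι → ℝ) : 0 ≤ u ⬝ᵥ C *ᵥ u := by
  simpa using hC.dotProduct_mulVec_nonneg u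

end Matrix.PosSemidef

namespace Matrix.IsHermitian

open scoped MatrixOrder

variable {ι : Type*} [Fintype ι] [DecidableEq ι] {B : Matrix ι ι ℝ}

theorem dotProduct_mulVec_le_iSup_eigenvalues (hB : B.IsHermitian) (x : ι → ℝ) :
    x ⬝ᵥ B *ᵥ x ≤ (⨆ i, hB.eigenvalues i) * (x ⬝ᵥ x) := by
  have hle : B ≤ algebraMap ℝ _ (⨆ i, hB.eigenvalues i) := by
    rw [le_algebraMap_iff_spectrum_le hB.isSelfAdjoint, hB.spectrum_real_eq_range_eigenvalues]
    rintro _ ⟨i, rfl⟩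
    exact le_ciSup (Set.finite_range _).bddAbove i
  simpa [sub_mulVec, Algebra.algebraMap_eq_smul_one, smul_mulVec, dotProduct_smul]
    using (Matrix.le_iff.mp hle).dotProduct_mulVec_nonneg x

theorem iInf_eigenvalues_mul_le_dotProduct_mulVec (hB : B.IsHermitian) (x : ι → ℝ) :
    (⨅ i, hB.eigenvalues i) * (x ⬝ᵥ x) ≤ x ⬝ᵥ B *ᵥ x := by
  have hle : algebraMap ℝ _ (⨅ i, hB.eigenvalues i) ≤ B := by
    rw [algebraMap_le_iff_le_spectrum hB.isSelfAdjoint, hB.spectrum_real_eq_range_eigenvalues]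
    rintro _ ⟨i, rfl⟩
    exact ciInf_le (Set.finite_range _).bddBelow i
  simpa [sub_mulVec, Algebra.algebraMap_eq_smul_one, smul_mulVec, dotProduct_smul]
    using (Matrix.le_iff.mp hle).dotProduct_mulVec_nonneg x

end Matrix.IsHermitian

namespace Matrix.PosDef

variable {ι : Type*} [Fintype ι] [DecidableEq ι] {B C : Matrix ι ι ℝ} {ρ : ℝ}

/-- With `w = B⁻¹ C y` one has `‖w‖²_B = yᵀ C w`, and Cauchy–Schwarz for the form `C`
together with `C ⪯ ρ B` bounds this by `ρ ‖y‖_B ‖w‖_B`. -/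
theorem dotProduct_mulVec_inv_mul_le (hB : B.PosDef) (hC : C.PosSemidef)
    (hCB : (ρ • B - C).PosSemidef) (y : ι → ℝ) :
    (B⁻¹ * C) *ᵥ y ⬝ᵥ B *ᵥ ((B⁻¹ * C) *ᵥ y) ≤ ρ ^ 2 * (y ⬝ᵥ B *ᵥ y) := by
  set w := (B⁻¹ * C) *ᵥ y
  have hCsymm : Cᵀ = C := by rw [← conjTranspose_eq_transpose_of_trivial, hC.1.eq]
  have hw : w ⬝ᵥ B *ᵥ w = y ⬝ᵥ C *ᵥ w := by
    rw [mulVec_mulVec, ← Matrix.mul_assoc, mul_nonsing_inv _ (hB.isUnit.map detMonoidHom),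
      Matrix.one_mul, dotProduct_mulVec, ← mulVec_transpose, hCsymm, dotProduct_comm]
  have hform : ∀ u, u ⬝ᵥ C *ᵥ u ≤ ρ * (u ⬝ᵥ B *ᵥ u) := fun u => by
    have := hCB.dotProduct_mulVec_nonneg' u
    rwa [sub_mulVec, smul_mulVec, dotProduct_sub, dotProduct_smul, smul_eq_mul, sub_nonneg] at this
  have hBw := hB.posSemidef.dotProduct_mulVec_nonneg' w
  have key : (w ⬝ᵥ B *ᵥ w) * (w ⬝ᵥ B *ᵥ w) ≤ (ρ ^ 2 * (y ⬝ᵥ B *ᵥ y)) * (w ⬝ᵥ B *ᵥ w) :=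
    calc (w ⬝ᵥ B *ᵥ w) * (w ⬝ᵥ B *ᵥ w)
        ≤ (y ⬝ᵥ C *ᵥ y) * (w ⬝ᵥ C *ᵥ w) := by
          rw [← sq, hw]
          exact hC.dotProduct_mulVec_sq_le y w
      _ ≤ (ρ * (y ⬝ᵥ B *ᵥ y)) * (ρ * (w ⬝ᵥ B *ᵥ w)) :=
          mul_le_mul (hform y) (hform w) (hC.dotProduct_mulVec_nonneg' w)
            ((hC.dotProduct_mulVec_nonneg' y).trans (hform y))
      _ = (ρ ^ 2 * (y ⬝ᵥ B *ᵥ y)) * (w ⬝ᵥ B *ᵥ w) := by ring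
  rcases hBw.eq_or_lt with h0 | hpos
  · rw [← h0]
    exact mul_nonneg (sq_nonneg ρ) (hB.posSemidef.dotProduct_mulVec_nonneg' y)
  · exact le_of_mul_le_mul_right key hpos

end Matrix.PosDef

section BNorm

variable {n : ℕ} {A B : Matrix (Fin n) (Fin n) ℝ}

noncomputable def Matrix.PosSemidef.vecBSeminorm (hB : B.PosSemidef) :
    AddGroupSeminorm (Fin n → ℝ) :=
  @normAddGroupSeminorm _ (B.toSeminormedAddCommGroup hB).toSeminormedAddGroup

theorem Matrix.PosSemidef.vecBSeminorm_apply (hB : B.PosSemidef) (x : Fin n → ℝ) :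
    hB.vecBSeminorm x = vecBNorm B x := by
  rw [vecBNorm, dotProduct_comm]
  rfl

theorem vecBNorm_sq (hB : B.PosSemidef) (x : Fin n → ℝ) : vecBNorm B x ^ 2 = x ⬝ᵥ B *ᵥ x :=
  Real.sq_sqrt (hB.dotProduct_mulVec_nonneg' x)

theorem vecBNorm_one_sub_inv_mul_mulVec_le (hB : B.PosDef) {κ : ℝ} (hκ : 1 ≤ κ)
    (hAB : (B - A).PosSemidef) (hBA : (κ • A - B).PosSemidef) (y : Fin n → ℝ) :
    vecBNorm B ((1 - B⁻¹ * A) *ᵥ y) ≤ (1 - κ⁻¹) * vecBNorm B y := by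
  have hκ0 : 0 < κ := zero_lt_one.trans_le hκ
  have hρ : 0 ≤ 1 - κ⁻¹ := sub_nonneg.2 (inv_le_one_of_one_le₀ hκ)
  have hR : 1 - B⁻¹ * A = B⁻¹ * (B - A) := by
    rw [Matrix.mul_sub, nonsing_inv_mul _ (hB.isUnit.map detMonoidHom)]
  have hCB : ((1 - κ⁻¹) • B - (B - A)).PosSemidef := by
    convert hBA.smul (inv_nonneg.2 hκ0.le) using 1
    rw [smul_sub, smul_smul, inv_mul_cancel₀ hκ0.ne', one_smul, sub_smul, one_smul]
    abel
  have hsq : vecBNorm B ((1 - B⁻¹ * A) *ᵥ y) ^ 2 ≤ ((1 - κ⁻¹) * vecBNorm B y) ^ 2 := by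
    rw [mul_pow, vecBNorm_sq hB.posSemidef, vecBNorm_sq hB.posSemidef, hR]
    exact hB.dotProduct_mulVec_inv_mul_le hAB hCB y
  exact (sq_le_sq₀ (Real.sqrt_nonneg _) (mul_nonneg hρ (Real.sqrt_nonneg _))).1 hsq

/-- The condition number enters through `λ_min ‖v‖² ≤ ‖v‖²_B` and `‖x‖²_B ≤ λ_max ‖x‖²`. -/
theorem abs_dotProduct_le_of_vecBNorm_le (hB : B.PosDef) {x v : Fin n → ℝ} {c : ℝ}
    (hc : 0 ≤ c) (hv : vecBNorm B v ≤ c * vecBNorm B x) :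
    |x ⬝ᵥ v| ≤ c * √(condNumber B hB.1) * (x ⬝ᵥ x) := by
  rcases isEmpty_or_nonempty (Fin n) with hn | hn
  · simp [Subsingleton.elim x 0]
  have hmin : 0 < ⨅ i, hB.1.eigenvalues i := by
    obtain ⟨i, hi⟩ := exists_eq_ciInf_of_finite (f := hB.1.eigenvalues)
    rw [← hi]
    exact hB.eigenvalues_pos i
  have hmax : 0 < ⨆ i, hB.1.eigenvalues i :=
    (hB.eigenvalues_pos hn.some).trans_le (le_ciSup (Set.finite_range _).bddAbove _)
  set lmin := ⨅ i, hB.1.eigenvalues i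
  set lmax := ⨆ i, hB.1.eigenvalues i
  have hxx : 0 ≤ x ⬝ᵥ x := by simpa using dotProduct_star_self_nonneg x
  have hvB : lmin * (v ⬝ᵥ v) ≤ c ^ 2 * (lmax * (x ⬝ᵥ x)) :=
    calc lmin * (v ⬝ᵥ v) ≤ vecBNorm B v ^ 2 := by
          rw [vecBNorm_sq hB.posSemidef]
          exact hB.1.iInf_eigenvalues_mul_le_dotProduct_mulVec v
      _ ≤ (c * vecBNorm B x) ^ 2 := by gcongr; exact Real.sqrt_nonneg _
      _ ≤ c ^ 2 * (lmax * (x ⬝ᵥ x)) := by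
          rw [mul_pow, vecBNorm_sq hB.posSemidef]
          gcongr
          exact hB.1.dotProduct_mulVec_le_iSup_eigenvalues x
  have hCS : (x ⬝ᵥ v) ^ 2 ≤ (x ⬝ᵥ x) * (v ⬝ᵥ v) := by
    simpa using PosSemidef.one.dotProduct_mulVec_sq_le x v
  apply abs_le_of_sq_le_sq _ (by unfold condNumber; positivity)
  rw [mul_pow, mul_pow, Real.sq_sqrt (by unfold condNumber; positivity), condNumber]
  calc (x ⬝ᵥ v) ^ 2 = lmin * (x ⬝ᵥ v) ^ 2 / lmin := by field_simp
    _ ≤ (x ⬝ᵥ x) * (c ^ 2 * (lmax * (x ⬝ᵥ x))) / lmin := by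
        gcongr ?_ / _
        calc lmin * (x ⬝ᵥ v) ^ 2 ≤ lmin * ((x ⬝ᵥ x) * (v ⬝ᵥ v)) := by gcongr
          _ = (x ⬝ᵥ x) * (lmin * (v ⬝ᵥ v)) := by ring
          _ ≤ (x ⬝ᵥ x) * (c ^ 2 * (lmax * (x ⬝ᵥ x))) := by gcongr
    _ = c ^ 2 * (lmax / lmin) * (x ⬝ᵥ x) ^ 2 := by ring

end BNorm

theorem sum_pow_succ_sub_pow_succ_div_le {a ρ : ℝ} (hρ : 0 ≤ ρ) (hρa : ρ ≤ a) (ha : a < 1)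
    (l : ℕ) : ∑ i ∈ range l, (a ^ (i + 1) - ρ ^ (i + 1)) / (i + 1) ≤ (a - ρ) / (1 - a) := by
  have hterm (i : ℕ) : (a ^ (i + 1) - ρ ^ (i + 1)) / (i + 1) ≤ (a - ρ) * a ^ i := by
    have h := abs_pow_sub_pow_le a ρ (i + 1)
    rw [abs_of_nonneg (sub_nonneg.2 (pow_le_pow_left₀ hρ hρa _)), abs_of_nonneg (sub_nonneg.2 hρa),
      abs_of_nonneg hρ, abs_of_nonneg (hρ.trans hρa), max_eq_left hρa, Nat.add_sub_cancel] at h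
    rw [div_le_iff₀ (by positivity)]
    push_cast at h
    linarith
  calc ∑ i ∈ range l, (a ^ (i + 1) - ρ ^ (i + 1)) / (i + 1)
      ≤ ∑ i ∈ range l, (a - ρ) * a ^ i := sum_le_sum fun i _ => hterm i
    _ = (a - ρ) * ∑ i ∈ range l, a ^ i := (mul_sum ..).symm
    _ ≤ (a - ρ) * (1 / (1 - a)) := by
        refine mul_le_mul_of_nonneg_left ?_ (sub_nonneg.2 hρa)
        rw [range_eq_Ico, ← pow_zero a]
        exact geom_sum_Ico_le_of_lt_one (hρ.trans hρa) ha
    _ = (a - ρ) / (1 - a) := by ring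

theorem abs_sum_inv_mul_sub_sum_inv_mul_le {a ρ K : ℝ} {u v : ℕ → ℝ} (hρ : 0 ≤ ρ) (hρa : ρ ≤ a)
    (ha : a < 1) (hK : 0 ≤ K) (huv : ∀ i, |u i - v i| ≤ (a ^ (i + 1) - ρ ^ (i + 1)) * K)
    (l : ℕ) :
    |∑ i ∈ range l, 1 / (i + 1 : ℝ) * u i - ∑ i ∈ range l, 1 / (i + 1 : ℝ) * v i|
      ≤ (a - ρ) / (1 - a) * K := by
  rw [← sum_sub_distrib]
  calc |∑ i ∈ range l, (1 / (i + 1 : ℝ) * u i - 1 / (i + 1 : ℝ) * v i)|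
      ≤ ∑ i ∈ range l, |1 / (i + 1 : ℝ) * u i - 1 / (i + 1 : ℝ) * v i| := abs_sum_le_sum_abs _ _
    _ ≤ ∑ i ∈ range l, (a ^ (i + 1) - ρ ^ (i + 1)) / (i + 1) * K := by
        gcongr with i
        rw [← mul_sub, abs_mul, abs_of_pos (by positivity), div_mul_eq_mul_div, one_mul,
          div_mul_eq_mul_div]
        gcongr
        exact huv i
    _ = (∑ i ∈ range l, (a ^ (i + 1) - ρ ^ (i + 1)) / (i + 1)) * K := (sum_mul ..).symm
    _ ≤ (a - ρ) / (1 - a) * K := by gcongr; exact sum_pow_succ_sub_pow_succ_div_le hρ hρa ha l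

theorem one_add_mul_one_sub_inv_lt_one_and_div_le {κ ν : ℝ} (hκ : 1 ≤ κ) (hν : 0 ≤ ν)
    (hνκ : ν < 1 / (2 * κ)) :
    (1 + ν) * (1 - κ⁻¹) < 1 ∧
      ((1 + ν) * (1 - κ⁻¹) - (1 - κ⁻¹)) / (1 - (1 + ν) * (1 - κ⁻¹)) ≤ 2 * κ * ν := by
  have hκ0 : 0 < κ := zero_lt_one.trans_le hκ
  have h2κν : ν * (2 * κ) < 1 := (lt_div_iff₀ (by positivity)).1 hνκ
  have hexpand : 2 * κ * (1 - (1 + ν) * (1 - κ⁻¹)) = 2 - 2 * κ * ν * (1 - κ⁻¹) := by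
    field_simp
    ring
  have hgap : 1 < 2 * κ * (1 - (1 + ν) * (1 - κ⁻¹)) := by
    nlinarith [inv_nonneg.2 hκ0.le]
  refine ⟨by nlinarith, ?_⟩
  rw [div_le_iff₀ (by nlinarith)]
  nlinarith [inv_nonneg.2 hκ0.le]

theorem iterate_toLin'_eq_pow_mulVec {R ι : Type*} [CommSemiring R] [Fintype ι] [DecidableEq ι]
    (M : Matrix ι ι R) (k : ℕ) (v : ι → R) :
    (⇑(toLin' M))^[k] v = (M ^ k) *ᵥ v := by
  rw [← toLin'_apply, toLin'_pow, Module.End.pow_apply]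

theorem approximate_sequence_martin_sum_error_general
    {n : ℕ} (A B : Matrix (Fin n) (Fin n) ℝ) (hB : B.PosDef)
    (κ : ℝ) (hκ : 2 ≤ κ)
    (hAB : (B - A).PosSemidef) (hBA : (κ • A - B).PosSemidef)
    (ν : ℝ) (hν : ν ∈ Set.Ioo (0 : ℝ) (1 / (2 * κ)))
    (x0 : Fin n → ℝ) (x : ℕ → Fin n → ℝ) (hstart : x 0 = x0)
    (hx : ∀ k : ℕ,
      vecBNorm B (x (k + 1) - (1 - B⁻¹ * A).mulVec (x k))
        ≤ ν * vecBNorm B ((1 - B⁻¹ * A).mulVec (x k))) :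
    ∀ l : ℕ,
      |∑ i ∈ Finset.range l, (1 / (i + 1 : ℝ)) * (x0 ⬝ᵥ ((1 - B⁻¹ * A) ^ (i + 1)).mulVec x0)
        - ∑ i ∈ Finset.range l, (1 / (i + 1 : ℝ)) * (x0 ⬝ᵥ x (i + 1))|
      ≤ 4 * ν * κ ^ 2 * Real.sqrt (condNumber B hB.1) * (x0 ⬝ᵥ x0) := by
  intro l
  obtain ⟨hν0, hν1⟩ := hν
  obtain ⟨ha, hratio⟩ := one_add_mul_one_sub_inv_lt_one_and_div_le (by linarith) hν0.le hν1
  set R := 1 - B⁻¹ * A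
  set ρ := 1 - κ⁻¹
  set a := (1 + ν) * ρ
  have hρ : 0 ≤ ρ := sub_nonneg.2 (inv_le_one_of_one_le₀ (by linarith))
  have hρa : ρ ≤ a := le_mul_of_one_le_left hρ (by linarith)
  have hR (y : Fin n → ℝ) : vecBNorm B (R *ᵥ y) ≤ ρ * vecBNorm B y :=
    vecBNorm_one_sub_inv_mul_mulVec_le hB (by linarith) hAB hBA y
  have hseq : hB.posSemidef.vecBSeminorm.IsApproxPowerSeq (toLin' R).toAddMonoidHom ν x :=
    fun k => by simpa [PosSemidef.vecBSeminorm_apply] using hx k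
  have herr (k : ℕ) : vecBNorm B (x k - (R ^ k) *ᵥ x0) ≤ (a ^ k - ρ ^ k) * vecBNorm B x0 := by
    simpa [PosSemidef.vecBSeminorm_apply, iterate_toLin'_eq_pow_mulVec, hstart, a] using
      hseq.apply_sub_iterate_le hρ hν0.le (by simpa [PosSemidef.vecBSeminorm_apply] using hR) k
  have hterm (i : ℕ) : |x0 ⬝ᵥ (R ^ (i + 1)) *ᵥ x0 - x0 ⬝ᵥ x (i + 1)|
      ≤ (a ^ (i + 1) - ρ ^ (i + 1)) * (√(condNumber B hB.1) * (x0 ⬝ᵥ x0)) := by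
    rw [← dotProduct_sub, ← abs_neg, ← dotProduct_neg, neg_sub, ← mul_assoc]
    exact abs_dotProduct_le_of_vecBNorm_le hB (sub_nonneg.2 (pow_le_pow_left₀ hρ hρa _))
      (herr (i + 1))
  have hK : 0 ≤ √(condNumber B hB.1) * (x0 ⬝ᵥ x0) :=
    mul_nonneg (Real.sqrt_nonneg _) (by simpa using dotProduct_star_self_nonneg x0)
  calc _ ≤ (a - ρ) / (1 - a) * (√(condNumber B hB.1) * (x0 ⬝ᵥ x0)) :=
        abs_sum_inv_mul_sub_sum_inv_mul_le hρ hρa ha hK hterm l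
    _ ≤ 4 * ν * κ ^ 2 * (√(condNumber B hB.1) * (x0 ⬝ᵥ x0)) := by
        gcongr ?_ * _
        exact hratio.trans (by nlinarith [mul_pos (by linarith : (0 : ℝ) < κ) hν0])
    _ = 4 * ν * κ ^ 2 * √(condNumber B hB.1) * (x0 ⬝ᵥ x0) := by ring

/-- error of the truncated Martin sums along a `ν`-approximate power sequence for
`R = I - B⁻¹A`, when `A ⪯ B ⪯ κ A`, `κ ≥ 2` and `ν ∈ (0, 1/(2κ))`:
`|Σ_{i=1}^l (1/i) x₀ᵀ Rⁱ x₀ - Σ_{i=1}^l (1/i) x₀ᵀ xᵢ| ≤ 4 ν κ² √(κ(B)) ‖x₀‖²`. -/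
theorem approximate_sequence_martin_sum_error
    {n : ℕ} (hn : 0 < n) (A B : Matrix (Fin n) (Fin n) ℝ) (hA : A.PosDef) (hB : B.PosDef)
    (κ : ℝ) (hκ : 2 ≤ κ)
    (hAB : (B - A).PosSemidef) (hBA : (κ • A - B).PosSemidef)
    (ν : ℝ) (hν : ν ∈ Set.Ioo (0 : ℝ) (1 / (2 * κ)))
    (x0 : Fin n → ℝ) (x : ℕ → Fin n → ℝ) (hstart : x 0 = x0)
    (hx : ∀ k : ℕ,
      vecBNorm B (x (k + 1) - (1 - B⁻¹ * A).mulVec (x k))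
        ≤ ν * vecBNorm B ((1 - B⁻¹ * A).mulVec (x k))) :
    ∀ l : ℕ,
      |∑ i ∈ Finset.range l, (1 / (i + 1 : ℝ)) * (x0 ⬝ᵥ ((1 - B⁻¹ * A) ^ (i + 1)).mulVec x0)
        - ∑ i ∈ Finset.range l, (1 / (i + 1 : ℝ)) * (x0 ⬝ᵥ x (i + 1))|
      ≤ 4 * ν * κ ^ 2 * Real.sqrt (condNumber B hB.1) * (x0 ⬝ᵥ x0) :=
  approximate_sequence_martin_sum_error_general A B hB κ hκ hAB hBA ν hν x0 x hstart hx
end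

section
/- Let A and B be real symmetric positive definite n×n matrices with A ⪯ B ⪯ κ·A for some κ ≥ 2, let R = I − B^{−1}A, and let ε > 0. Suppose ν ≤ min( ε/(8·κ²·√(κ(B))), 1/(2κ) ), and for j = 1, …, p let (x_{i,j})_{i≥0} be a ν-approximate power sequence for R in the B-norm whose start vector x_{0,j} has unit Euclidean norm. Then for every l ∈ ℕ, the averaged estimator z_{p,l} = (1/p)·Σ_{j=1}^p Σ_{i=1}^l (1/i)·x_{0,j}ᵀ x_{i,j} satisfies | z_{p,l} − (1/p)·Σ_{j=1}^p Σ_{i=1}^l (1/i)·x_{0,j}ᵀ R^i x_{0,j} | ≤ 4·ν·κ²·√(κ(B)) ≤ ε/2. -/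
/-!
Because `B (I - B⁻¹A) = B - A` and `0 ⪯ B - A ⪯ (1 - 1/κ) B`, the matrix `R = I - B⁻¹A` contracts
the `B`-norm by `ρ = 1 - 1/κ`. An induction then keeps the `k`-th term of a `ν`-approximate power
sequence within `ρᵏ((1 + ν)ᵏ - 1)‖x₀‖_B` of `Rᵏx₀`, and passing from the `B`-norm to the dot
product with the unit vector `x₀` costs a factor `√κ(B)`. Since `(1 + ν)ⁱ - 1 ≤ iν(1 + ν)ⁱ`, the
weight `1/i` cancels, and the error is dominated by the geometric series `ν Σ (ρ(1 + ν))ⁱ ≤ 2κν`,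
as `ρ(1 + ν) ≤ 1 - 1/(2κ)` for `ν ≤ 1/(2κ)`.
-/

open Matrix

section ApproxPowerSeq

variable {E : Type*} [AddCommGroup E]

def IsApproxPowerSeq (N : AddGroupSeminorm E) (T : E →+ E) (ν : ℝ) (x : ℕ → E) : Prop :=
  ∀ k, N (x (k + 1) - T (x k)) ≤ ν * N (T (x k))

variable {N : AddGroupSeminorm E} {T : E →+ E} {ρ : ℝ}

theorem AddGroupSeminorm.iterate_le_pow_mul (hρ : 0 ≤ ρ) (hT : ∀ v, N (T v) ≤ ρ * N v)
    (v : E) (k : ℕ) : N (T^[k] v) ≤ ρ ^ k * N v := by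
  induction k with
  | zero => simp
  | succ k ih =>
    rw [Function.iterate_succ_apply', pow_succ', mul_assoc]
    exact (hT _).trans (mul_le_mul_of_nonneg_left ih hρ)

theorem IsApproxPowerSeq.sub_iterate_le {ν : ℝ} {x : ℕ → E} (hx : IsApproxPowerSeq N T ν x)
    (hν : 0 ≤ ν) (hρ : 0 ≤ ρ) (hT : ∀ v, N (T v) ≤ ρ * N v) (k : ℕ) :
    N (x k - T^[k] (x 0)) ≤ ρ ^ k * ((1 + ν) ^ k - 1) * N (x 0) := by
  induction k with
  | zero => simp
  | succ k ih =>
    set e := x k - T^[k] (x 0)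
    have hpow := AddGroupSeminorm.iterate_le_pow_mul hρ hT (x 0) k
    have hsplit : x (k + 1) - T^[k + 1] (x 0) = (x (k + 1) - T (x k)) + T e := by
      rw [Function.iterate_succ_apply', map_sub]; abel
    have hTx : N (T (x k)) ≤ ρ * (ρ ^ k * N (x 0) + N e) := by
      refine (hT _).trans (mul_le_mul_of_nonneg_left ?_ hρ)
      calc N (x k) = N (T^[k] (x 0) + e) := by rw [add_sub_cancel]
        _ ≤ _ := (map_add_le_add N _ _).trans (add_le_add_left hpow _)
    calc N (x (k + 1) - T^[k + 1] (x 0))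
        ≤ ν * (ρ * (ρ ^ k * N (x 0) + N e)) + ρ * N e := by
          rw [hsplit]
          exact (map_add_le_add N _ _).trans
            (add_le_add ((hx k).trans (mul_le_mul_of_nonneg_left hTx hν)) (hT e))
      _ ≤ ν * (ρ * (ρ ^ k * N (x 0) + ρ ^ k * ((1 + ν) ^ k - 1) * N (x 0)))
            + ρ * (ρ ^ k * ((1 + ν) ^ k - 1) * N (x 0)) := by gcongr
      _ = ρ ^ (k + 1) * ((1 + ν) ^ (k + 1) - 1) * N (x 0) := by ring

end ApproxPowerSeq

section PosSemidef

variable {ι : Type*} [Fintype ι]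

theorem Matrix.PosSemidef.inner_eq_dotProduct_mulVec {M : Matrix ι ι ℝ} (hM : M.PosSemidef)
    (u v : ι → ℝ) : @inner ℝ _ (M.toInnerProductSpace hM).toInner u v = u ⬝ᵥ M *ᵥ v :=
  dotProduct_comm _ _

theorem Matrix.PosSemidef.dotProduct_mulVec_self_nonneg {M : Matrix ι ι ℝ} (hM : M.PosSemidef)
    (u : ι → ℝ) : 0 ≤ u ⬝ᵥ M *ᵥ u := by
  simpa only [star_trivial] using hM.dotProduct_mulVec_nonneg u

theorem Matrix.PosSemidef.dotProduct_mulVec_comm {M : Matrix ι ι ℝ} (hM : M.PosSemidef)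
    (u v : ι → ℝ) : u ⬝ᵥ M *ᵥ v = v ⬝ᵥ M *ᵥ u := by
  let := M.toSeminormedAddCommGroup hM
  let := M.toInnerProductSpace hM
  rw [← hM.inner_eq_dotProduct_mulVec, real_inner_comm, hM.inner_eq_dotProduct_mulVec]

theorem Matrix.PosSemidef.dotProduct_mulVec_sq_le_s9 {M : Matrix ι ι ℝ} (hM : M.PosSemidef)
    (u v : ι → ℝ) : (u ⬝ᵥ M *ᵥ v) ^ 2 ≤ (u ⬝ᵥ M *ᵥ u) * (v ⬝ᵥ M *ᵥ v) := by
  let := M.toSeminormedAddCommGroup hM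
  let := M.toInnerProductSpace hM
  simpa only [hM.inner_eq_dotProduct_mulVec, sq] using real_inner_mul_inner_self_le u v

theorem Matrix.PosSemidef.sqrt_dotProduct_mulVec_eq_norm {M : Matrix ι ι ℝ} (hM : M.PosSemidef)
    (u : ι → ℝ) : √(u ⬝ᵥ M *ᵥ u) = @norm _ (M.toSeminormedAddCommGroup hM).toNorm u := by
  let := M.toSeminormedAddCommGroup hM
  let := M.toInnerProductSpace hM
  rw [norm_eq_sqrt_real_inner, hM.inner_eq_dotProduct_mulVec]

theorem abs_dotProduct_le_sqrt_mul_sqrt (u v : ι → ℝ) :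
    |u ⬝ᵥ v| ≤ √(u ⬝ᵥ u) * √(v ⬝ᵥ v) := by
  classical
  rw [← Real.sqrt_mul' _ (by simpa using dotProduct_self_star_nonneg v)]
  simpa using Real.abs_le_sqrt ((PosSemidef.one (n := ι) (R := ℝ)).dotProduct_mulVec_sq_le_s9 u v)

end PosSemidef

section BNorm

variable {n : ℕ} {B : Matrix (Fin n) (Fin n) ℝ}

noncomputable def vecBNormSeminorm (hB : B.PosSemidef) : AddGroupSeminorm (Fin n → ℝ) where
  toFun := vecBNorm B
  map_zero' := by simp [vecBNorm]
  add_le' u v := by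
    simp only [vecBNorm, hB.sqrt_dotProduct_mulVec_eq_norm]
    exact @norm_add_le _ (B.toSeminormedAddCommGroup hB).toSeminormedAddGroup u v
  neg' u := by simp [vecBNorm, mulVec_neg]

end BNorm

section Spectrum

open scoped MatrixOrder

variable {ι : Type*} [Fintype ι] [DecidableEq ι] {B : Matrix ι ι ℝ}

theorem Matrix.IsHermitian.dotProduct_mulVec_le_iSup_eigenvalues_mul (hB : B.IsHermitian)
    (x : ι → ℝ) : x ⬝ᵥ B *ᵥ x ≤ (⨆ i, hB.eigenvalues i) * (x ⬝ᵥ x) := by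
  have hle : B ≤ algebraMap ℝ _ (⨆ i, hB.eigenvalues i) := by
    refine le_algebraMap_of_spectrum_le ?_ hB
    rw [hB.spectrum_real_eq_range_eigenvalues]
    rintro _ ⟨i, rfl⟩
    exact le_ciSup (Set.finite_range _).bddAbove i
  have := (Matrix.le_iff.mp hle).dotProduct_mulVec_nonneg x
  simp only [Algebra.algebraMap_eq_smul_one, star_trivial, sub_mulVec, smul_mulVec, one_mulVec,
    dotProduct_sub, dotProduct_smul, smul_eq_mul] at this
  linarith

theorem Matrix.IsHermitian.iInf_eigenvalues_mul_le_dotProduct_mulVec_s9 (hB : B.IsHermitian)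
    (x : ι → ℝ) : (⨅ i, hB.eigenvalues i) * (x ⬝ᵥ x) ≤ x ⬝ᵥ B *ᵥ x := by
  have hle : algebraMap ℝ _ (⨅ i, hB.eigenvalues i) ≤ B := by
    refine algebraMap_le_of_le_spectrum ?_ hB
    rw [hB.spectrum_real_eq_range_eigenvalues]
    rintro _ ⟨i, rfl⟩
    exact ciInf_le (Set.finite_range _).bddBelow i
  have := (Matrix.le_iff.mp hle).dotProduct_mulVec_nonneg x
  simp only [Algebra.algebraMap_eq_smul_one, star_trivial, sub_mulVec, smul_mulVec, one_mulVec,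
    dotProduct_sub, dotProduct_smul, smul_eq_mul] at this
  linarith

theorem Matrix.PosDef.iInf_eigenvalues_pos [Nonempty ι] (hB : B.PosDef) :
    0 < ⨅ i, hB.1.eigenvalues i := by
  obtain ⟨i, hi⟩ := exists_eq_ciInf_of_finite (f := hB.1.eigenvalues)
  exact hi ▸ hB.eigenvalues_pos i

theorem Matrix.PosDef.condNumber_pos {n : ℕ} [Nonempty (Fin n)] {B : Matrix (Fin n) (Fin n) ℝ}
    (hB : B.PosDef) : 0 < condNumber B hB.1 :=
  div_pos (hB.iInf_eigenvalues_pos.trans_le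
    (ciInf_le_ciSup (Set.finite_range _).bddBelow (Set.finite_range _).bddAbove))
    hB.iInf_eigenvalues_pos

end Spectrum

section Contraction

variable {n : ℕ} {A B : Matrix (Fin n) (Fin n) ℝ} {κ : ℝ}

theorem dotProduct_sub_mulVec_le (hκ : 0 < κ) (hBA : (κ • A - B).PosSemidef) (u : Fin n → ℝ) :
    u ⬝ᵥ (B - A) *ᵥ u ≤ (1 - 1 / κ) * (u ⬝ᵥ B *ᵥ u) := by
  have h := hBA.dotProduct_mulVec_nonneg u
  simp only [star_trivial, sub_mulVec, smul_mulVec, dotProduct_sub, dotProduct_smul,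
    smul_eq_mul] at h ⊢
  have key : (1 - 1 / κ) * (u ⬝ᵥ B *ᵥ u) - (u ⬝ᵥ B *ᵥ u - u ⬝ᵥ A *ᵥ u)
      = (κ * (u ⬝ᵥ A *ᵥ u) - u ⬝ᵥ B *ᵥ u) / κ := by
    field_simp; ring
  linarith [div_nonneg h hκ.le]

/-- `B (1 - B⁻¹A) = B - A` and `0 ⪯ B - A ⪯ (1 - 1/κ) B`, so Cauchy–Schwarz for the form
`B - A` gives `‖Rv‖_B⁴ ≤ (1 - 1/κ)² ‖v‖_B² ‖Rv‖_B²`. -/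
theorem vecBNorm_mulVec_le (hB : B.PosDef) (hAB : (B - A).PosSemidef)
    (hBA : (κ • A - B).PosSemidef) (hκ : 1 ≤ κ) (v : Fin n → ℝ) :
    vecBNorm B ((1 - B⁻¹ * A) *ᵥ v) ≤ (1 - 1 / κ) * vecBNorm B v := by
  set R := 1 - B⁻¹ * A
  set ρ := 1 - 1 / κ
  have hκ₀ : 0 < κ := by linarith
  have hρ : 0 ≤ ρ := sub_nonneg.mpr (div_le_one_of_le₀ hκ hκ₀.le)
  have hBR : B * R = B - A := by
    rw [mul_sub, mul_one, mul_nonsing_inv_cancel_left _ _ (hB.isUnit.map detMonoidHom)]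
  have hd : R *ᵥ v ⬝ᵥ B *ᵥ R *ᵥ v = v ⬝ᵥ (B - A) *ᵥ R *ᵥ v := by
    rw [hAB.dotProduct_mulVec_comm, ← hBR, ← mulVec_mulVec]
  set d := R *ᵥ v ⬝ᵥ B *ᵥ R *ᵥ v
  have hd₀ : 0 ≤ d := hB.posSemidef.dotProduct_mulVec_self_nonneg _
  have hq : 0 ≤ v ⬝ᵥ B *ᵥ v := hB.posSemidef.dotProduct_mulVec_self_nonneg _
  have key : d * d ≤ ρ ^ 2 * (v ⬝ᵥ B *ᵥ v) * d :=
    calc d * d = (v ⬝ᵥ (B - A) *ᵥ R *ᵥ v) ^ 2 := by rw [hd, sq]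
      _ ≤ (v ⬝ᵥ (B - A) *ᵥ v) * (R *ᵥ v ⬝ᵥ (B - A) *ᵥ R *ᵥ v) :=
        hAB.dotProduct_mulVec_sq_le_s9 _ _
      _ ≤ (ρ * (v ⬝ᵥ B *ᵥ v)) * (ρ * d) :=
        mul_le_mul (dotProduct_sub_mulVec_le hκ₀ hBA v) (dotProduct_sub_mulVec_le hκ₀ hBA _)
          (hAB.dotProduct_mulVec_self_nonneg _) (by positivity)
      _ = ρ ^ 2 * (v ⬝ᵥ B *ᵥ v) * d := by ring
  have hdle : d ≤ ρ ^ 2 * (v ⬝ᵥ B *ᵥ v) := by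
    rcases hd₀.eq_or_lt with h | h
    · rw [← h]; positivity
    · exact le_of_mul_le_mul_right key h
  calc vecBNorm B (R *ᵥ v) = √d := rfl
    _ ≤ √(ρ ^ 2 * (v ⬝ᵥ B *ᵥ v)) := Real.sqrt_le_sqrt hdle
    _ = ρ * vecBNorm B v := by rw [Real.sqrt_mul' _ hq, Real.sqrt_sq hρ]; rfl

end Contraction

theorem abs_dotProduct_le_of_vecBNorm_le_s9 {n : ℕ} [Nonempty (Fin n)] {B : Matrix (Fin n) (Fin n) ℝ}
    (hB : B.PosDef) {u e : Fin n → ℝ} {t : ℝ} (ht : 0 ≤ t)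
    (he : vecBNorm B e ≤ t * vecBNorm B u) :
    |u ⬝ᵥ e| ≤ t * √(condNumber B hB.1) * (u ⬝ᵥ u) := by
  set a := ⨅ i, hB.1.eigenvalues i
  set b := ⨆ i, hB.1.eigenvalues i
  have ha : 0 < √a := Real.sqrt_pos.mpr hB.iInf_eigenvalues_pos
  have huu : 0 ≤ u ⬝ᵥ u := by simpa using dotProduct_self_star_nonneg u
  have hlow : √a * √(e ⬝ᵥ e) ≤ vecBNorm B e := by
    rw [← Real.sqrt_mul hB.iInf_eigenvalues_pos.le]
    exact Real.sqrt_le_sqrt (hB.1.iInf_eigenvalues_mul_le_dotProduct_mulVec_s9 e)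
  have hup : vecBNorm B u ≤ √b * √(u ⬝ᵥ u) := by
    rw [← Real.sqrt_mul' _ huu]
    exact Real.sqrt_le_sqrt (hB.1.dotProduct_mulVec_le_iSup_eigenvalues_mul u)
  have hcond : √(condNumber B hB.1) = √b / √a := Real.sqrt_div' _ hB.iInf_eigenvalues_pos.le
  have hee : √(e ⬝ᵥ e) ≤ t * √b * √(u ⬝ᵥ u) / √a := by
    rw [le_div_iff₀ ha, mul_assoc t, mul_comm]
    exact hlow.trans (he.trans (mul_le_mul_of_nonneg_left hup ht))
  calc |u ⬝ᵥ e| ≤ √(u ⬝ᵥ u) * √(e ⬝ᵥ e) := abs_dotProduct_le_sqrt_mul_sqrt u e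
    _ ≤ √(u ⬝ᵥ u) * (t * √b * √(u ⬝ᵥ u) / √a) := by gcongr
    _ = t * √(condNumber B hB.1) * (u ⬝ᵥ u) := by
      rw [hcond]; field_simp; rw [Real.sq_sqrt huu]; ring

theorem one_add_pow_sub_one_le {ν : ℝ} (hν : 0 ≤ ν) (m : ℕ) :
    (1 + ν) ^ m - 1 ≤ m * ν * (1 + ν) ^ m := by
  have hsum : ∑ i ∈ Finset.range m, (1 + ν) ^ i ≤ m * (1 + ν) ^ m := by
    simpa using Finset.sum_le_card_nsmul (Finset.range m) (fun i => (1 + ν) ^ i) ((1 + ν) ^ m)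
      fun i hi => pow_le_pow_right₀ (by linarith) (Finset.mem_range.mp hi).le
  rw [← geom_sum_mul, add_sub_cancel_left]
  nlinarith

theorem sum_one_div_succ_mul_error_le {κ ν : ℝ} (hκ : 1 ≤ κ) (hν₀ : 0 ≤ ν)
    (hν : ν ≤ 1 / (2 * κ)) (l : ℕ) :
    ∑ i ∈ Finset.range l, 1 / (i + 1 : ℝ) * ((1 - 1 / κ) ^ (i + 1) * ((1 + ν) ^ (i + 1) - 1))
      ≤ 2 * κ * ν := by
  set ρ := 1 - 1 / κ
  set r := ρ * (1 + ν)
  have hκ₀ : 0 < κ := by linarith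
  have hρ₀ : 0 ≤ ρ := sub_nonneg.mpr (div_le_one_of_le₀ hκ hκ₀.le)
  have hr₀ : 0 ≤ r := by positivity
  have hr : 1 / (2 * κ) ≤ 1 - r := by
    have : 1 / (2 * κ) = 1 / κ - 1 / (2 * κ) := by field_simp; ring
    nlinarith
  have hr₁ : r < 1 := by linarith [one_div_pos.mpr (by positivity : 0 < 2 * κ)]
  have hterm : ∀ i ∈ Finset.range l,
      1 / (i + 1 : ℝ) * (ρ ^ (i + 1) * ((1 + ν) ^ (i + 1) - 1)) ≤ ν * r ^ i := by
    intro i _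
    calc 1 / (i + 1 : ℝ) * (ρ ^ (i + 1) * ((1 + ν) ^ (i + 1) - 1))
        ≤ 1 / (i + 1 : ℝ) * (ρ ^ (i + 1) * ((i + 1 : ℕ) * ν * (1 + ν) ^ (i + 1))) := by
          gcongr; exact one_add_pow_sub_one_le hν₀ (i + 1)
      _ = ν * r ^ (i + 1) := by rw [mul_pow]; push_cast; field_simp
      _ ≤ ν * r ^ i := mul_le_mul_of_nonneg_left (pow_le_pow_of_le_one hr₀ hr₁.le i.le_succ) hν₀
  have hgeom : ∑ i ∈ Finset.range l, r ^ i ≤ 1 / (1 - r) := by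
    simpa [← Finset.range_eq_Ico] using geom_sum_Ico_le_of_lt_one (m := 0) (n := l) hr₀ hr₁
  calc _ ≤ ∑ i ∈ Finset.range l, ν * r ^ i := Finset.sum_le_sum hterm
    _ ≤ ν * (1 / (1 - r)) := by rw [← Finset.mul_sum]; gcongr
    _ ≤ 2 * κ * ν := by
      rw [mul_comm _ ν]
      gcongr
      rw [div_le_iff₀ (by linarith)]
      rw [div_le_iff₀ (by positivity)] at hr
      linarith

theorem Matrix.pow_mulVec_eq_iterate {ι : Type*} [Fintype ι] [DecidableEq ι]
    (R : Matrix ι ι ℝ) (k : ℕ) (v : ι → ℝ) : (R ^ k) *ᵥ v = (R *ᵥ ·)^[k] v := by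
  induction k with
  | zero => simp
  | succ k ih => rw [Function.iterate_succ_apply', ← ih, pow_succ', ← mulVec_mulVec]

theorem abs_sum_one_div_succ_mul_sub_le {n : ℕ} [Nonempty (Fin n)]
    {A B : Matrix (Fin n) (Fin n) ℝ} (hB : B.PosDef) (hAB : (B - A).PosSemidef) {κ ν : ℝ}
    (hBA : (κ • A - B).PosSemidef) (hκ : 1 ≤ κ) (hν₀ : 0 ≤ ν) (hν : ν ≤ 1 / (2 * κ))
    {x : ℕ → Fin n → ℝ} (hx₀ : x 0 ⬝ᵥ x 0 = 1)
    (hx : IsApproxPowerSeq (vecBNormSeminorm hB.posSemidef)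
      (mulVecLin (1 - B⁻¹ * A)).toAddMonoidHom ν x) (l : ℕ) :
    |∑ i ∈ Finset.range l, 1 / (i + 1 : ℝ) * (x 0 ⬝ᵥ x (i + 1))
      - ∑ i ∈ Finset.range l, 1 / (i + 1 : ℝ) * (x 0 ⬝ᵥ ((1 - B⁻¹ * A) ^ (i + 1)) *ᵥ x 0)|
      ≤ 2 * κ * ν * √(condNumber B hB.1) := by
  set R := 1 - B⁻¹ * A
  have hρ : 0 ≤ 1 - 1 / κ := sub_nonneg.mpr (div_le_one_of_le₀ hκ (by linarith))
  have hterm (m : ℕ) : |x 0 ⬝ᵥ x m - x 0 ⬝ᵥ (R ^ m) *ᵥ x 0|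
      ≤ (1 - 1 / κ) ^ m * ((1 + ν) ^ m - 1) * √(condNumber B hB.1) := by
    have herr : vecBNorm B (x m - (R ^ m) *ᵥ x 0)
        ≤ (1 - 1 / κ) ^ m * ((1 + ν) ^ m - 1) * vecBNorm B (x 0) := by
      rw [R.pow_mulVec_eq_iterate]
      exact hx.sub_iterate_le hν₀ hρ (vecBNorm_mulVec_le hB hAB hBA hκ) m
    have ht : 0 ≤ (1 - 1 / κ) ^ m * ((1 + ν) ^ m - 1) :=
      mul_nonneg (pow_nonneg hρ m) (sub_nonneg.mpr (one_le_pow₀ (by linarith)))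
    simpa [← dotProduct_sub, hx₀] using abs_dotProduct_le_of_vecBNorm_le_s9 hB ht herr
  rw [← Finset.sum_sub_distrib]
  calc _ ≤ ∑ i ∈ Finset.range l, 1 / (i + 1 : ℝ)
          * ((1 - 1 / κ) ^ (i + 1) * ((1 + ν) ^ (i + 1) - 1) * √(condNumber B hB.1)) := by
        refine (Finset.abs_sum_le_sum_abs _ _).trans (Finset.sum_le_sum fun i _ => ?_)
        rw [← mul_sub, abs_mul, abs_of_pos (by positivity)]
        exact mul_le_mul_of_nonneg_left (hterm (i + 1)) (by positivity)
    _ ≤ 2 * κ * ν * √(condNumber B hB.1) := by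
      simp only [← mul_assoc, ← Finset.sum_mul]
      gcongr
      simpa only [mul_assoc] using sum_one_div_succ_mul_error_le hκ hν₀ hν l

theorem abs_one_div_card_mul_sum_le {ι : Type*} (s : Finset ι) {f : ι → ℝ} {C : ℝ}
    (hC : 0 ≤ C) (hf : ∀ j ∈ s, |f j| ≤ C) : |1 / (s.card : ℝ) * ∑ j ∈ s, f j| ≤ C := by
  rcases s.eq_empty_or_nonempty with rfl | hs
  · simpa using hC
  rw [abs_mul, abs_of_pos (by positivity), one_div_mul_eq_div, div_le_iff₀ (by positivity),
    mul_comm, ← nsmul_eq_mul]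
  exact (Finset.abs_sum_le_sum_abs _ _).trans (Finset.sum_le_card_nsmul _ _ _ hf)

theorem averaged_approximate_sequence_error_general
    {n p : ℕ} (hn : 0 < n) (A B : Matrix (Fin n) (Fin n) ℝ) (hB : B.PosDef)
    (κ : ℝ) (hκ : 2 ≤ κ) (ε : ℝ)
    (hAB : (B - A).PosSemidef) (hBA : (κ • A - B).PosSemidef)
    (ν : ℝ) (hν0 : 0 < ν)
    (hν : ν ≤ min (ε / (8 * κ ^ 2 * Real.sqrt (condNumber B hB.1))) (1 / (2 * κ)))
    (x : Fin p → ℕ → Fin n → ℝ)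
    (hunit : ∀ j, Real.sqrt (x j 0 ⬝ᵥ x j 0) = 1)
    (hx : ∀ j, ∀ k : ℕ,
      vecBNorm B (x j (k + 1) - (1 - B⁻¹ * A).mulVec (x j k))
        ≤ ν * vecBNorm B ((1 - B⁻¹ * A).mulVec (x j k))) :
    ∀ l : ℕ,
      |(1 / p : ℝ) * ∑ j : Fin p, ∑ i ∈ Finset.range l, (1 / (i + 1 : ℝ)) * (x j 0 ⬝ᵥ x j (i + 1))
        - (1 / p : ℝ) * ∑ j : Fin p, ∑ i ∈ Finset.range l,
            (1 / (i + 1 : ℝ)) * (x j 0 ⬝ᵥ ((1 - B⁻¹ * A) ^ (i + 1)).mulVec (x j 0))|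
        ≤ 4 * ν * κ ^ 2 * Real.sqrt (condNumber B hB.1) ∧
      4 * ν * κ ^ 2 * Real.sqrt (condNumber B hB.1) ≤ ε / 2 := by
  intro l
  have : Nonempty (Fin n) := Fin.pos_iff_nonempty.mp hn
  obtain ⟨hνε, hνκ⟩ := le_min_iff.mp hν
  have hs : 0 < √(condNumber B hB.1) := Real.sqrt_pos.mpr hB.condNumber_pos
  have hκν : 2 * κ * ν * √(condNumber B hB.1) ≤ 4 * ν * κ ^ 2 * √(condNumber B hB.1) := by
    have := mul_le_mul_of_nonneg_right (show 2 * κ ≤ 4 * κ ^ 2 by nlinarith) (mul_pos hν0 hs).le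
    linarith
  refine ⟨?_, ?_⟩
  · rw [← mul_sub, ← Finset.sum_sub_distrib]
    simpa using abs_one_div_card_mul_sum_le Finset.univ (by positivity) fun j _ =>
      (abs_sum_one_div_succ_mul_sub_le hB hAB hBA (by linarith) hν0.le hνκ
        (Real.sqrt_eq_one.mp (hunit j)) (hx j) l).trans hκν
  · rw [le_div_iff₀ (by positivity)] at hνε
    linarith

/-- deterministic error of the averaged estimator built from `p` unit-norm
`ν`-approximate power sequences for `R = I - B⁻¹A`, with
`ν ≤ min(ε/(8κ²√(κ(B))), 1/(2κ))`: the deviation is at most `4νκ²√(κ(B)) ≤ ε/2`. -/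
theorem averaged_approximate_sequence_error
    {n p : ℕ} (hn : 0 < n) (A B : Matrix (Fin n) (Fin n) ℝ) (hA : A.PosDef) (hB : B.PosDef)
    (κ : ℝ) (hκ : 2 ≤ κ) (ε : ℝ) (hε : 0 < ε)
    (hAB : (B - A).PosSemidef) (hBA : (κ • A - B).PosSemidef)
    (ν : ℝ) (hν0 : 0 < ν)
    (hν : ν ≤ min (ε / (8 * κ ^ 2 * Real.sqrt (condNumber B hB.1))) (1 / (2 * κ)))
    (x : Fin p → ℕ → Fin n → ℝ)
    (hunit : ∀ j, Real.sqrt (x j 0 ⬝ᵥ x j 0) = 1)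
    (hx : ∀ j, ∀ k : ℕ,
      vecBNorm B (x j (k + 1) - (1 - B⁻¹ * A).mulVec (x j k))
        ≤ ν * vecBNorm B ((1 - B⁻¹ * A).mulVec (x j k))) :
    ∀ l : ℕ,
      |(1 / p : ℝ) * ∑ j : Fin p, ∑ i ∈ Finset.range l, (1 / (i + 1 : ℝ)) * (x j 0 ⬝ᵥ x j (i + 1))
        - (1 / p : ℝ) * ∑ j : Fin p, ∑ i ∈ Finset.range l,
            (1 / (i + 1 : ℝ)) * (x j 0 ⬝ᵥ ((1 - B⁻¹ * A) ^ (i + 1)).mulVec (x j 0))|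
        ≤ 4 * ν * κ ^ 2 * Real.sqrt (condNumber B hB.1) ∧
      4 * ν * κ ^ 2 * Real.sqrt (condNumber B hB.1) ≤ ε / 2 :=
  averaged_approximate_sequence_error_general hn A B hB κ hκ ε hAB hBA ν hν0 hν x hunit hx
end
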